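/- Let H ∈ C^{m×n} with full column rank and C ∈ C^{m×m} Hermitian positive definite. For any e ∈ C^m satisfying e^H H + e^T H^* = u_i^T, the variance e^H C e + e^T C^* e^* is at least the i-th diagonal entry of (2 Re(H^H C^{-1} H))^{-1}. -/

import Mathlib

/-!
Write `A = Hᴴ C⁻¹ H` and `B = A + Ā = 2 Re A`. The candidate `f = C⁻¹ H a` with the real vector
`a = B⁻¹ uᵢ` is unbiased and has variance `aᵀ B a = (B⁻¹)ᵢᵢ`. For any other unbiased `e`, the
difference `d = e - f` satisfies `dᴴ H + dᵀ H* = 0`; since `C f = H a` with `a` real, the cross term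
is proportional to `2 Re (dᴴ C f) = (dᴴ H + dᵀ H*) a = 0`, so the variance of `e` is that of `f` plus the
nonnegative variance of `d`.
-/

open Matrix ComplexOrder

namespace Matrix

section StarRing

variable {m n R : Type*} [CommRing R] [StarRing R]

/-- The mean of the widely linear estimate `eᴴ y + eᵀ y*` of a real parameter `θ` from
`y = H θ + noise` is `widelyLinearMean H e ⬝ᵥ θ`. Here and in `widelyLinearVariance` the conjugate
summand is written as the `star` of the first one; `widelyLinearMean_eq` and
`widelyLinearVariance_eq` recover the forms `eᴴ H + eᵀ H*` and `eᴴ C e + eᵀ C* e*`. -/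
def widelyLinearMean [Fintype m] (H : Matrix m n R) (e : m → R) : n → R :=
  star e ᵥ* H + star (star e ᵥ* H)

def widelyLinearVariance [Fintype m] (C : Matrix m m R) (e : m → R) : R :=
  star e ⬝ᵥ C *ᵥ e + star (star e ⬝ᵥ C *ᵥ e)

lemma star_vecMul_star [Fintype m] (H : Matrix m n R) (e : m → R) :
    star (star e ᵥ* H) = e ᵥ* H.map (starRingEnd R) := by
  rw [star_vecMul, star_star, ← vecMul_transpose]
  rfl

lemma star_mulVec_eq_map_mulVec_star [Fintype n] (M : Matrix m n R) (v : n → R) :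
    star (M *ᵥ v) = M.map (starRingEnd R) *ᵥ star v := by
  rw [star_mulVec, ← mulVec_transpose]
  rfl

lemma IsHermitian.map_starRingEnd {A : Matrix n n R} (hA : A.IsHermitian) :
    A.map (starRingEnd R) = Aᵀ := by
  conv_rhs => rw [← hA.eq]
  rfl

lemma map_starRingEnd_nonsing_inv [Fintype n] [DecidableEq n] (M : Matrix n n R) :
    M⁻¹.map (starRingEnd R) = (M.map (starRingEnd R))⁻¹ := by
  change (M⁻¹)ᴴᵀ = (Mᴴᵀ)⁻¹
  rw [conjTranspose_nonsing_inv, transpose_nonsing_inv]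

lemma widelyLinearMean_eq [Fintype m] (H : Matrix m n R) (e : m → R) :
    widelyLinearMean H e = star e ᵥ* H + e ᵥ* H.map (starRingEnd R) := by
  rw [widelyLinearMean, star_vecMul_star]

lemma widelyLinearVariance_eq [Fintype m] (C : Matrix m m R) (e : m → R) :
    widelyLinearVariance C e = star e ⬝ᵥ C *ᵥ e + e ⬝ᵥ C.map (starRingEnd R) *ᵥ star e := by
  rw [widelyLinearVariance, star_dotProduct, star_star, star_mulVec_eq_map_mulVec_star,
    dotProduct_comm]

lemma widelyLinearMean_sub [Fintype m] (H : Matrix m n R) (x y : m → R) :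
    widelyLinearMean H (x - y) = widelyLinearMean H x - widelyLinearMean H y := by
  simp only [widelyLinearMean, star_sub, sub_vecMul]
  abel

lemma widelyLinearVariance_add [Fintype m] {C : Matrix m m R} (hC : C.IsHermitian)
    (x y : m → R) :
    widelyLinearVariance C (x + y) = widelyLinearVariance C x + widelyLinearVariance C y +
      2 * (star x ⬝ᵥ C *ᵥ y + star (star x ⬝ᵥ C *ᵥ y)) := by
  have hyx : star y ⬝ᵥ C *ᵥ x = star (star x ⬝ᵥ C *ᵥ y) := by
    rw [← star_dotProduct_star, star_star, star_mulVec, ← dotProduct_mulVec, hC.eq]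
  simp only [widelyLinearVariance, star_add, mulVec_add, dotProduct_add, add_dotProduct, hyx,
    star_star]
  ring

lemma add_star_dotProduct_mulVec_eq_widelyLinearMean_dotProduct [Fintype m] [Fintype n]
    {C : Matrix m m R} {H : Matrix m n R} {a : n → R} {f : m → R} (hf : C *ᵥ f = H *ᵥ a)
    (ha : star a = a) (x : m → R) :
    star x ⬝ᵥ C *ᵥ f + star (star x ⬝ᵥ C *ᵥ f) = widelyLinearMean H x ⬝ᵥ a := by
  rw [hf, dotProduct_mulVec, widelyLinearMean, add_dotProduct, ← star_dotProduct_star, ha,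
    dotProduct_comm a]

lemma widelyLinearMean_inv_mulVec [Fintype m] [Fintype n] [DecidableEq m] (C : Matrix m m R)
    (H : Matrix m n R) {a : n → R} (ha : star a = a) :
    widelyLinearMean H (C⁻¹ *ᵥ (H *ᵥ a)) =
      (Hᴴ * C⁻¹ * H + (Hᴴ * C⁻¹ * H).map (starRingEnd R)) *ᵥ a := by
  have hHf : star (C⁻¹ *ᵥ (H *ᵥ a)) ᵥ* H = star ((Hᴴ * C⁻¹ * H) *ᵥ a) := by
    rw [← mulVec_mulVec, ← mulVec_mulVec, star_mulVec Hᴴ, conjTranspose_conjTranspose]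
  rw [widelyLinearMean, hHf, star_star, star_mulVec_eq_map_mulVec_star, ha, add_mulVec, add_comm]

lemma widelyLinearVariance_le_of_widelyLinearMean_eq [Fintype m] [Fintype n] [PartialOrder R]
    [StarOrderedRing R] {C : Matrix m m R} (hC : C.PosSemidef) {H : Matrix m n R} {a : n → R}
    {f : m → R} (hf : C *ᵥ f = H *ᵥ a) (ha : star a = a) {e : m → R}
    (he : widelyLinearMean H e = widelyLinearMean H f) :
    widelyLinearVariance C f ≤ widelyLinearVariance C e := by
  have hcross := add_star_dotProduct_mulVec_eq_widelyLinearMean_dotProduct hf ha (e - f)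
  rw [widelyLinearMean_sub, he, sub_self, zero_dotProduct] at hcross
  have hd : 0 ≤ widelyLinearVariance C (e - f) :=
    add_nonneg (hC.dotProduct_mulVec_nonneg _) (star_nonneg_iff.2 (hC.dotProduct_mulVec_nonneg _))
  calc widelyLinearVariance C f
      ≤ widelyLinearVariance C (e - f) + widelyLinearVariance C f := le_add_of_nonneg_left hd
    _ = widelyLinearVariance C (e - f + f) := by
        rw [widelyLinearVariance_add hC.isHermitian, hcross, mul_zero, add_zero]
    _ = widelyLinearVariance C e := by rw [sub_add_cancel]

end StarRing

lemma mulVec_injective_of_rank_eq_card {m n K : Type*} [Fintype n] [Field K] {A : Matrix m n K}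
    (h : A.rank = Fintype.card n) : Function.Injective A.mulVec := by
  have hker := LinearMap.finrank_range_add_finrank_ker A.mulVecLin
  rw [← rank, h, Module.finrank_fintype_fun_eq_card, add_eq_left,
    Submodule.finrank_eq_zero] at hker
  exact LinearMap.ker_eq_bot.mp hker

lemma two_smul_map_re {m n : Type*} (A : Matrix m n ℂ) :
    (2 : ℂ) • A.map (fun z => (z.re : ℂ)) = A + A.map (starRingEnd ℂ) := by
  ext
  simp [Complex.add_conj]

end Matrix

/-- For any `e` satisfying `eᴴ H + eᵀ H* = uᵢᵀ`, the variance `eᴴ C e + eᵀ C* e*` is at least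
the `i`-th diagonal entry of `(2 Re(Hᴴ C⁻¹ H))⁻¹`. -/
theorem stmt10 {m n : ℕ} (H : Matrix (Fin m) (Fin n) ℂ) (C : Matrix (Fin m) (Fin m) ℂ)
    (hC : C.PosDef) (hrank : H.rank = n) (i : Fin n) (e : Fin m → ℂ)
    (he : star e ᵥ* H + e ᵥ* H.map (starRingEnd ℂ) = Pi.single i 1) :
    (((2 : ℂ) • (Hᴴ * C⁻¹ * H).map (fun z => (z.re : ℂ)))⁻¹) i i
      ≤ star e ⬝ᵥ C.mulVec e + e ⬝ᵥ (C.map (starRingEnd ℂ)).mulVec (star e) := by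
  set A := Hᴴ * C⁻¹ * H
  have hA : A.PosDef := hC.inv.conjTranspose_mul_mul_same
    (mulVec_injective_of_rank_eq_card (by rwa [Fintype.card_fin]))
  have hB : (A + A.map (starRingEnd ℂ)).PosDef := by
    rw [hA.isHermitian.map_starRingEnd]
    exact hA.add hA.transpose
  rw [two_smul_map_re, ← widelyLinearVariance_eq]
  rw [← widelyLinearMean_eq] at he
  set B := A + A.map (starRingEnd ℂ)
  have hB_real : B.map (starRingEnd ℂ) = B := by
    ext
    simp [B, add_comm]
  set a := B⁻¹ *ᵥ Pi.single i 1
  have ha : star a = a := by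
    rw [star_mulVec_eq_map_mulVec_star, map_starRingEnd_nonsing_inv, hB_real, Pi.star_single,
      star_one]
  set f := C⁻¹ *ᵥ (H *ᵥ a)
  have hf : C *ᵥ f = H *ᵥ a := by
    rw [mulVec_mulVec, mul_nonsing_inv _ ((isUnit_iff_isUnit_det C).mp hC.isUnit), one_mulVec]
  have hf_mean : widelyLinearMean H f = Pi.single i 1 := by
    rw [widelyLinearMean_inv_mulVec C H ha, mulVec_mulVec,
      mul_nonsing_inv _ ((isUnit_iff_isUnit_det B).mp hB.isUnit), one_mulVec]
  calc B⁻¹ i i = widelyLinearVariance C f := by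
        rw [widelyLinearVariance, add_star_dotProduct_mulVec_eq_widelyLinearMean_dotProduct hf ha f,
          hf_mean, single_one_dotProduct]
        exact congrFun (mulVec_single_one B⁻¹ i).symm i
    _ ≤ widelyLinearVariance C e :=
        widelyLinearVariance_le_of_widelyLinearMean_eq hC.posSemidef hf ha (he.trans hf_mean.symm)
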